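/- If α > 1/2 and d is an exact metric on U, then for every pure Nash equilibrium e, every agent i, and every strategy x ∈ Z with x ≠ e(i), d(x, s_i) ≥ ((2α−1)/(2α))·d(x, e(i)); i.e., the global boundary β is at least (2α−1)/(2α). -/

import Mathlib

/-!
Against a fixed target `a`, moving from `y` to `x` saves at most `d(x, y)` in the distance to `a`
(triangle inequality), so a point `y` minimising `α d(s, ·) + (1 - α) d(·, a)` satisfies
`α d(s, y) ≤ α d(s, x) + (1 - α) d(x, y)`. A second triangle inequality through `s` bounds
`d(x, y)` by `d(x, s) + d(s, y)`, and solving gives `(2α - 1) d(x, y) ≤ 2α d(x, s)`.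
At an equilibrium, the point `e i` is such a minimiser over `Z`, with `a = aggr i e`, because a
unilateral deviation of agent `i` leaves its aggregate unchanged.
-/

noncomputable def prefCost {U : Type*} [MetricSpace U] {ι : Type*} (α : ℝ)
    (s : ι → U) (aggr : ι → (ι → U) → U) (i : ι) (z : ι → U) : ℝ :=
  α * dist (s i) (z i) + (1 - α) * dist (z i) (aggr i z)

section WeightedDistance

variable {U : Type*} [MetricSpace U]

theorem dist_mul_le_of_weighted_dist_le {α : ℝ} (hα1 : α ≤ 1) {s a x y : U}
    (hmin : α * dist s y + (1 - α) * dist y a ≤ α * dist s x + (1 - α) * dist x a) :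
    α * dist s y ≤ α * dist s x + (1 - α) * dist x y := by
  have hdev : (1 - α) * dist x a ≤ (1 - α) * (dist x y + dist y a) :=
    mul_le_mul_of_nonneg_left (dist_triangle x y a) (by linarith)
  linarith

theorem div_mul_dist_le_of_weighted_dist_le {α : ℝ} (hα : 1 / 2 < α) (hα1 : α ≤ 1) {s a x y : U}
    (hmin : α * dist s y + (1 - α) * dist y a ≤ α * dist s x + (1 - α) * dist x a) :
    (2 * α - 1) / (2 * α) * dist x y ≤ dist x s := by
  have hsy := dist_mul_le_of_weighted_dist_le hα1 hmin
  have hxy : α * dist x y ≤ α * (dist x s + dist s y) :=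
    mul_le_mul_of_nonneg_left (dist_triangle x s y) (by linarith)
  rw [dist_comm s x] at hsy
  rw [div_mul_eq_mul_div, div_le_iff₀ (by linarith)]
  linarith

end WeightedDistance

theorem prefCost_update_self {U : Type*} [MetricSpace U] {ι : Type*} [DecidableEq ι] (α : ℝ)
    (s : ι → U) {aggr : ι → (ι → U) → U}
    (hindep : ∀ i (x y : ι → U), (∀ j, j ≠ i → x j = y j) → aggr i x = aggr i y)
    (e : ι → U) (i : ι) (x : U) :
    prefCost α s aggr i (Function.update e i x) = α * dist (s i) x + (1 - α) * dist x (aggr i e) := by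
  have hagg : aggr i (Function.update e i x) = aggr i e :=
    hindep i _ _ fun j hj => Function.update_of_ne hj _ _
  simp only [prefCost, Function.update_self, hagg]

theorem stmt_9_general {U : Type*} [MetricSpace U] {ι : Type*} [DecidableEq ι]
    (Z : Set U) (s : ι → U) (aggr : ι → (ι → U) → U)
    (α : ℝ) (hα : 1/2 < α) (hα1 : α ≤ 1)
    (hindep : ∀ i (x y : ι → U), (∀ j, j ≠ i → x j = y j) → aggr i x = aggr i y)
    (e : ι → U)
    (heq : ∀ i, ∀ y ∈ Z, prefCost α s aggr i e ≤ prefCost α s aggr i (Function.update e i y)) :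
    ∀ i, ∀ x ∈ Z, x ≠ e i →
      ((2*α - 1)/(2*α)) * dist x (e i) ≤ dist x (s i) := by
  intro i x hx _
  have hmin := heq i x hx
  rw [prefCost_update_self α s hindep] at hmin
  exact div_mul_dist_le_of_weighted_dist_le hα hα1 hmin

/-- if `α > 1/2` and `d` is an exact metric, then for every equilibrium `e`,
agent `i` and strategy `x ∈ Z` with `x ≠ e i`,
`d(x, s_i) ≥ ((2α-1)/(2α)) d(x, e_i)`; i.e., the boundary is at least `(2α-1)/(2α)`. -/
theorem stmt_9 {U : Type*} [MetricSpace U] {ι : Type*} [DecidableEq ι]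
    (Z : Set U) (s : ι → U) (aggr : ι → (ι → U) → U)
    (α : ℝ) (hα : 1/2 < α) (hα1 : α ≤ 1)
    (haggrZ : ∀ i x, aggr i x ∈ Z)
    (hindep : ∀ i (x y : ι → U), (∀ j, j ≠ i → x j = y j) → aggr i x = aggr i y)
    (e : ι → U) (heZ : ∀ i, e i ∈ Z)
    (heq : ∀ i, ∀ y ∈ Z, prefCost α s aggr i e ≤ prefCost α s aggr i (Function.update e i y)) :
    ∀ i, ∀ x ∈ Z, x ≠ e i →
      ((2*α - 1)/(2*α)) * dist x (e i) ≤ dist x (s i) :=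
  stmt_9_general Z s aggr α hα hα1 hindep e heq
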